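/- For every integer k ≥ 1 and all complex numbers x and t with t ∉ {±1, ±2, …, ±k}, one has ( ν_{2k}(x) − ν_{2k}(t) ) / (x − t) = Σ_{j=0}^{2k−1} ( ν_{2k}(t) / ν_{j+1}(t) ) · ν_j(x) / ⌊(j+2)/2⌋ (for x = t interpret the left side as the derivative-free polynomial identity obtained by clearing the factor x − t). -/

import Mathlib

open Finset

/-- The binomial polynomial `binom(y,k) = y(y−1)⋯(y−k+1)/k!` evaluated at `y : ℂ`. -/
noncomputable def bin (y : ℂ) (k : ℕ) : ℂ :=
  (∏ i ∈ range k, (y - i)) / (k.factorial : ℂ)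

/-- `ν_{2j}(x) = binom(x−1,j)·binom(x+j,j)` and `ν_{2j+1}(x) = binom(x−1,j+1)·binom(x+j,j)`. -/
noncomputable def nu (n : ℕ) (x : ℂ) : ℂ :=
  bin (x - 1) (n / 2 + n % 2) * bin (x + (n / 2 : ℕ)) (n / 2)

lemma bin_succ (y : ℂ) (k : ℕ) : bin y (k+1) = bin y k * (y - k) / ((k:ℂ)+1) := by
  have hf : ((k.factorial : ℂ)) ≠ 0 := Nat.cast_ne_zero.mpr k.factorial_ne_zero
  have hk1 : ((k:ℂ)+1) ≠ 0 := Nat.cast_add_one_ne_zero k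
  unfold bin
  rw [Finset.prod_range_succ, Nat.factorial_succ]
  push_cast
  rw [div_mul_eq_mul_div, div_div]
  ring

lemma bin_shift (y : ℂ) (k : ℕ) : bin (y+1) (k+1) = bin y k * (y+1) / ((k:ℂ)+1) := by
  have hf : ((k.factorial : ℂ)) ≠ 0 := Nat.cast_ne_zero.mpr k.factorial_ne_zero
  have hk1 : ((k:ℂ)+1) ≠ 0 := Nat.cast_add_one_ne_zero k
  unfold bin
  rw [Finset.prod_range_succ', Nat.factorial_succ]
  have hp : ∏ i ∈ range k, (y + 1 - ((i:ℕ)+1 : ℂ)) = ∏ i ∈ range k, (y - i) := by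
    exact Finset.prod_congr rfl fun i _ => by push_cast; ring
  push_cast
  rw [hp, div_mul_eq_mul_div, div_div]
  ring

lemma nu_even (m : ℕ) (x : ℂ) : nu (2*m) x = bin (x-1) m * bin (x+m) m := by
  have h1 : (2*m)/2 = m := by omega
  have h2 : (2*m)%2 = 0 := by omega
  simp [nu, h1, h2]

lemma nu_odd (m : ℕ) (x : ℂ) : nu (2*m+1) x = bin (x-1) (m+1) * bin (x+m) m := by
  have h1 : (2*m+1)/2 = m := by omega
  have h2 : (2*m+1)%2 = 1 := by omega
  simp [nu, h1, h2]

lemma ratio_even (m : ℕ) (x : ℂ) :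
    ((m:ℂ)+1) * nu (2*m+1) x = nu (2*m) x * (x - ((m:ℂ)+1)) := by
  have hk1 : ((m:ℂ)+1) ≠ 0 := Nat.cast_add_one_ne_zero m
  rw [nu_odd, nu_even, bin_succ]
  field_simp
  ring

lemma ratio_odd (m : ℕ) (x : ℂ) :
    ((m:ℂ)+1) * nu (2*m+2) x = nu (2*m+1) x * (x + ((m:ℂ)+1)) := by
  have hk1 : ((m:ℂ)+1) ≠ 0 := Nat.cast_add_one_ne_zero m
  have h : (2*m+2) = 2*(m+1) := by ring
  rw [h, nu_odd, nu_even]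
  have h3 : (x + ((m+1:ℕ):ℂ)) = (x + (m:ℕ)) + 1 := by push_cast; ring
  rw [h3, bin_shift]
  field_simp
  ring

lemma nu_zero (x : ℂ) : nu 0 x = 1 := by simp [nu, bin]

lemma bin_ne_zero1 {t : ℂ} {k a : ℕ} (ha : a ≤ k)
    (ht : ∀ i : ℕ, 1 ≤ i → i ≤ k → t ≠ (i : ℂ) ∧ t ≠ -(i : ℂ)) :
    bin (t - 1) a ≠ 0 := by
  unfold bin
  apply div_ne_zero
  · apply Finset.prod_ne_zero_iff.mpr
    intro i hi
    simp only [Finset.mem_range] at hi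
    have h := (ht (i+1) (by omega) (by omega)).1
    intro hc
    apply h
    push_cast
    linear_combination hc
  · exact Nat.cast_ne_zero.mpr a.factorial_ne_zero

lemma bin_ne_zero2 {t : ℂ} {k b : ℕ} (hb : b ≤ k)
    (ht : ∀ i : ℕ, 1 ≤ i → i ≤ k → t ≠ (i : ℂ) ∧ t ≠ -(i : ℂ)) :
    bin (t + (b:ℕ)) b ≠ 0 := by
  unfold bin
  apply div_ne_zero
  · apply Finset.prod_ne_zero_iff.mpr
    intro i hi
    simp only [Finset.mem_range] at hi
    have h := (ht (b - i) (by omega) (by omega)).2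
    intro hc
    apply h
    have hcast : ((b - i : ℕ) : ℂ) = (b:ℂ) - (i:ℂ) := by
      push_cast [Nat.cast_sub (le_of_lt hi)]; ring
    rw [hcast]
    linear_combination hc
  · exact Nat.cast_ne_zero.mpr b.factorial_ne_zero

lemma nu_ne_zero {t : ℂ} {k : ℕ} (n : ℕ) (hn : n ≤ 2*k)
    (ht : ∀ i : ℕ, 1 ≤ i → i ≤ k → t ≠ (i : ℂ) ∧ t ≠ -(i : ℂ)) :
    nu n t ≠ 0 := by
  unfold nu
  exact mul_ne_zero (bin_ne_zero1 (by omega) ht) (bin_ne_zero2 (by omega) ht)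

theorem nu_difference_identity (k : ℕ) (hk : 1 ≤ k) (x t : ℂ)
    (ht : ∀ i : ℕ, 1 ≤ i → i ≤ k → t ≠ (i : ℂ) ∧ t ≠ -(i : ℂ)) :
    nu (2 * k) x - nu (2 * k) t =
      (x - t) * ∑ j ∈ range (2 * k),
        nu (2 * k) t / nu (j + 1) t * nu j x / (((j + 2) / 2 : ℕ) : ℂ) := by
  have hT : nu (2*k) t ≠ 0 := nu_ne_zero (2*k) le_rfl ht
  rw [Finset.mul_sum]
  have hterm : ∀ j ∈ range (2*k),
      (x - t) * (nu (2 * k) t / nu (j + 1) t * nu j x / (((j + 2) / 2 : ℕ) : ℂ)) =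
      nu (2 * k) t * (nu (j+1) x / nu (j+1) t) - nu (2 * k) t * (nu j x / nu j t) := by
    intro j hj
    simp only [Finset.mem_range] at hj
    have hjt : nu j t ≠ 0 := nu_ne_zero j (by omega) ht
    have hjt1 : nu (j+1) t ≠ 0 := nu_ne_zero (j+1) (by omega) ht
    obtain ⟨m, hm⟩ : ∃ m, m = j / 2 := ⟨j/2, rfl⟩
    have hc : ((j + 2) / 2 : ℕ) = m + 1 := by omega
    have hm1 : ((m:ℂ)+1) ≠ 0 := Nat.cast_add_one_ne_zero m
    rw [hc]
    push_cast
    rcases Nat.even_or_odd j with ⟨p, hp⟩ | ⟨p, hp⟩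
    · have hjeq : j = 2*m := by omega
      subst hjeq
      have h1 := ratio_even m x
      have h2 := ratio_even m t
      have htc : t - ((m:ℂ)+1) ≠ 0 := by
        have := (ht (m+1) (by omega) (by omega)).1
        push_cast at this
        exact sub_ne_zero.mpr this
      have hx1 : nu (2*m+1) x = nu (2*m) x * (x - ((m:ℂ)+1)) / ((m:ℂ)+1) := by
        rw [eq_div_iff hm1]; linear_combination h1
      have ht1 : nu (2*m+1) t = nu (2*m) t * (t - ((m:ℂ)+1)) / ((m:ℂ)+1) := by
        rw [eq_div_iff hm1]; linear_combination h2
      rw [hx1, ht1]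
      field_simp
      ring
    · have hjeq : j = 2*m+1 := by omega
      subst hjeq
      have h1 := ratio_odd m x
      have h2 := ratio_odd m t
      have he : 2*m+1+1 = 2*m+2 := by ring
      rw [he] at hjt1 ⊢
      have htc : t + ((m:ℂ)+1) ≠ 0 := by
        have := (ht (m+1) (by omega) (by omega)).2
        push_cast at this
        intro hcon
        exact this (by linear_combination hcon)
      have hx1 : nu (2*m+2) x = nu (2*m+1) x * (x + ((m:ℂ)+1)) / ((m:ℂ)+1) := by
        rw [eq_div_iff hm1]; linear_combination h1
      have ht1 : nu (2*m+2) t = nu (2*m+1) t * (t + ((m:ℂ)+1)) / ((m:ℂ)+1) := by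
        rw [eq_div_iff hm1]; linear_combination h2
      rw [hx1, ht1]
      field_simp
      ring
  rw [Finset.sum_congr rfl hterm, Finset.sum_range_sub (fun j => nu (2*k) t * (nu j x / nu j t))]
  rw [nu_zero, nu_zero]
  field_simp
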